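/- arXiv:2310.14770 — 2 statements merged into one kernel-verified Lean document; each statement's English description precedes it below -/
import Mathlib

section
/- Theorem (H-consistency bound for cross-entropy score-based surrogates, conditional form, case μ ∈ [2,∞)). For every μ ∈ [2,∞), every conditional probability vector p, and every score vector v ∈ ℝ^{n+1}, the abstention calibration gap is bounded linearly by the surrogate calibration gap: ΔC_abs(v,p) ≤ (μ − 1) · (n+1)^{μ−1} · ΔC_μ(v,p). This is the conditional form, over a symmetric and complete hypothesis set, of the H-consistency bound with Γ_μ(t) = (μ−1)(n+1)^{μ−1} t; in particular the mean absolute error surrogate (μ = 2) satisfies ΔC_abs(v,p) ≤ (n+1) ΔC_2(v,p). -/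
/- Setting: `n = m + 1 ≥ 2` classes (indices `0, …, m` of `Fin (m+2)` via `castSucc`), the
abstention label is `Fin.last (m+1)`, and `c ∈ (0,1)` is the abstention cost. -/

/-- Maximum of the class scores. -/
noncomputable def classMax (m : ℕ) (v : Fin (m + 2) → ℝ) : ℝ :=
  Finset.univ.sup' Finset.univ_nonempty (fun i : Fin (m + 1) => v i.castSucc)

/-- The prediction `𝗁(v)` of a score vector: the abstention label `Fin.last (m+1)` if its score
is at least the maximal class score, and otherwise the smallest class index achieving the
maximal class score (deterministic tie-breaking). -/
noncomputable def pred (m : ℕ) (v : Fin (m + 2) → ℝ) : Fin (m + 2) :=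
  if classMax m v ≤ v (Fin.last (m + 1)) then Fin.last (m + 1)
  else Fin.castSucc <|
    (Finset.univ.filter fun i : Fin (m + 1) => v i.castSucc = classMax m v).min'
      (by
        obtain ⟨b, -, hb⟩ :=
          Finset.exists_mem_eq_sup' (Finset.univ_nonempty (α := Fin (m + 1)))
            (fun i : Fin (m + 1) => v i.castSucc)
        exact ⟨b, Finset.mem_filter.mpr ⟨Finset.mem_univ b, hb.symm⟩⟩)

/-- Extension of a conditional probability vector by `p (n+1) := 1 - c`. -/
noncomputable def pext (m : ℕ) (c : ℝ) (p : Fin (m + 1) → ℝ) : Fin (m + 2) → ℝ :=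
  Fin.snoc p (1 - c)

/-- Conditional abstention risk `C_abs(v, p) = 1 - p(𝗁(v))`. -/
noncomputable def condAbsRisk (m : ℕ) (c : ℝ) (p : Fin (m + 1) → ℝ)
    (v : Fin (m + 2) → ℝ) : ℝ :=
  1 - pext m c p (pred m v)

/-- The cross-entropy family of losses `ℓ_μ` (logistic loss at `μ = 1`, generalized
cross-entropy for `μ ∈ (1,2)`, mean absolute error at `μ = 2`). -/
noncomputable def ellmu (m : ℕ) (μ : ℝ) (v : Fin (m + 2) → ℝ) (y : Fin (m + 2)) : ℝ :=
  if μ = 1 then Real.log (∑ y', Real.exp (v y' - v y))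
  else (1 / (1 - μ)) * ((∑ y', Real.exp (v y' - v y)) ^ (1 - μ) - 1)

/-- Conditional risk of the cross-entropy score-based surrogate
`C_μ(v, p) = Σ_{y=1}^{n+1} p(y) ℓ_μ(v, y)`, with `p(n+1) = 1 - c`. -/
noncomputable def condSurRisk (m : ℕ) (μ c : ℝ) (p : Fin (m + 1) → ℝ)
    (v : Fin (m + 2) → ℝ) : ℝ :=
  ∑ y, pext m c p y * ellmu m μ v y

/-! With `q = softmax v`, one has `ℓ_μ(v, y) = (1 - q y ^ (μ - 1)) / (μ - 1)`, so
`C_μ(v, p) = (Σ p - Σ_y p y * q y ^ (μ - 1)) / (μ - 1)`. Letting the score of a maximizer `a`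
of `p` tend to `∞` shows `inf C_μ ≤ (Σ p - p a) / (μ - 1)`, hence
`(μ - 1) ΔC_μ(v, p) ≥ p a - Σ_y p y * q y ^ (μ - 1)`. As `μ - 1 ≥ 1`, `Σ_y q y ^ (μ - 1) ≤ 1`,
which bounds the right side below by `(p a - p h) * q h ^ (μ - 1)` for every label `h`.
For `h = 𝗁(v)`, a maximizer of `v` and thus of `q`, `q h ≥ 1 / (n + 1)`, while
`ΔC_abs(v, p) ≤ p a - p h`. -/

open Finset Filter Topology Real

section Softmax

variable {ι : Type*} [Fintype ι]

noncomputable def softmax (v : ι → ℝ) (y : ι) : ℝ :=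
  exp (v y) / ∑ y', exp (v y')

lemma sum_exp_pos [Nonempty ι] (v : ι → ℝ) : 0 < ∑ y, exp (v y) :=
  sum_pos (fun _ _ => exp_pos _) univ_nonempty

lemma softmax_pos [Nonempty ι] (v : ι → ℝ) (y : ι) : 0 < softmax v y :=
  div_pos (exp_pos _) (sum_exp_pos v)

lemma sum_softmax [Nonempty ι] (v : ι → ℝ) : ∑ y, softmax v y = 1 := by
  simp only [softmax, ← sum_div, div_self (sum_exp_pos v).ne']

lemma softmax_le_one [Nonempty ι] (v : ι → ℝ) (y : ι) : softmax v y ≤ 1 :=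
  sum_softmax v ▸ single_le_sum (fun y _ => (softmax_pos v y).le) (mem_univ y)

lemma sum_exp_sub_eq_inv_softmax [Nonempty ι] (v : ι → ℝ) (y : ι) :
    ∑ y', exp (v y' - v y) = (softmax v y)⁻¹ := by
  simp only [exp_sub, ← sum_div, softmax, inv_div]

lemma softmax_le_softmax [Nonempty ι] {v : ι → ℝ} {y z : ι} (h : v y ≤ v z) :
    softmax v y ≤ softmax v z :=
  div_le_div_of_nonneg_right (exp_le_exp.mpr h) (sum_exp_pos v).le

lemma inv_card_le_softmax [Nonempty ι] {v : ι → ℝ} {z : ι} (hz : ∀ y, v y ≤ v z) :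
    (Fintype.card ι : ℝ)⁻¹ ≤ softmax v z := by
  have : (1 : ℝ) ≤ Fintype.card ι * softmax v z :=
    calc (1 : ℝ) = ∑ y, softmax v y := (sum_softmax v).symm
      _ ≤ ∑ _y : ι, softmax v z := sum_le_sum fun y _ => softmax_le_softmax (hz y)
      _ = Fintype.card ι * softmax v z := by simp
  rwa [inv_le_iff_one_le_mul₀' (by exact_mod_cast Fintype.card_pos)]

lemma tendsto_softmax_ite_self [Nonempty ι] [DecidableEq ι] (a : ι) :
    Tendsto (fun t : ℝ => softmax (fun y => if y = a then t else 0) a) atTop (𝓝 1) := by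
  have hinv : Tendsto (fun t : ℝ => (softmax (fun y => if y = a then t else 0) a)⁻¹) atTop
      (𝓝 (∑ y : ι, if y = a then 1 else 0)) := by
    simp_rw [← sum_exp_sub_eq_inv_softmax]
    refine tendsto_finsetSum _ fun y _ => ?_
    by_cases hy : y = a
    · simp [hy]
    · simpa [hy] using tendsto_exp_neg_atTop_nhds_zero
  simpa using hinv.inv₀ (by simp)

end Softmax

lemma sub_mul_rpow_le_sub_sum {ι : Type*} [Fintype ι] {p q : ι → ℝ} {r : ℝ} (hr : 1 ≤ r)
    {a : ι} (hpa : 0 ≤ p a) (ha : ∀ y, p y ≤ p a) (hq0 : ∀ y, 0 ≤ q y) (hq1 : ∑ y, q y ≤ 1)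
    (h : ι) : (p a - p h) * q h ^ r ≤ p a - ∑ y, p y * q y ^ r := by
  have hq_le_one : ∀ y, q y ≤ 1 := fun y =>
    (single_le_sum (fun y _ => hq0 y) (mem_univ y)).trans hq1
  have hsum_rpow : ∑ y, q y ^ r ≤ 1 :=
    (sum_le_sum fun y _ => rpow_le_self_of_le_one (hq0 y) (hq_le_one y) hr).trans hq1
  calc (p a - p h) * q h ^ r ≤ ∑ y, (p a - p y) * q y ^ r :=
        single_le_sum (f := fun y => (p a - p y) * q y ^ r)
          (fun y _ => mul_nonneg (sub_nonneg.mpr (ha y)) (rpow_nonneg (hq0 y) r)) (mem_univ h)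
    _ = p a * ∑ y, q y ^ r - ∑ y, p y * q y ^ r := by
        rw [mul_sum, ← sum_sub_distrib]; exact sum_congr rfl fun y _ => by ring
    _ ≤ p a - ∑ y, p y * q y ^ r := by linarith [mul_le_of_le_one_right hpa hsum_rpow]

section AbstentionRisks

variable (m : ℕ)

lemma le_apply_pred (v : Fin (m + 2) → ℝ) (y : Fin (m + 2)) : v y ≤ v (pred m v) := by
  have le_classMax : ∀ i : Fin (m + 1), v i.castSucc ≤ classMax m v := fun i =>
    le_sup' (fun i : Fin (m + 1) => v i.castSucc) (mem_univ i)
  unfold pred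
  split_ifs with hlast
  · cases y using Fin.lastCases with
    | last => exact le_rfl
    | cast i => exact (le_classMax i).trans hlast
  · generalize_proofs hne
    rw [(mem_filter.mp (min'_mem _ hne)).2]
    cases y using Fin.lastCases with
    | last => exact (not_le.mp hlast).le
    | cast i => exact le_classMax i

variable (c : ℝ) (p : Fin (m + 1) → ℝ)

lemma pext_nonneg (hc : c ≤ 1) (hp : ∀ y, 0 ≤ p y) (y : Fin (m + 2)) : 0 ≤ pext m c p y := by
  cases y using Fin.lastCases with
  | last => simpa [pext] using hc
  | cast i => simpa [pext] using hp i

lemma condAbsRisk_sub_iInf_le {a : Fin (m + 2)} (ha : ∀ y, pext m c p y ≤ pext m c p a)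
    (v : Fin (m + 2) → ℝ) :
    condAbsRisk m c p v - ⨅ w, condAbsRisk m c p w ≤ pext m c p a - pext m c p (pred m v) := by
  have : 1 - pext m c p a ≤ ⨅ w, condAbsRisk m c p w :=
    le_ciInf fun w => by unfold condAbsRisk; linarith [ha (pred m w)]
  unfold condAbsRisk at *
  linarith

variable (μ : ℝ)

lemma ellmu_eq_softmax (hμ : μ ≠ 1) (w : Fin (m + 2) → ℝ) (y : Fin (m + 2)) :
    ellmu m μ w y = (1 - softmax w y ^ (μ - 1)) / (μ - 1) := by
  have hμ' : μ - 1 ≠ 0 := sub_ne_zero.mpr hμ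
  have hμ'' : 1 - μ ≠ 0 := sub_ne_zero.mpr (Ne.symm hμ)
  rw [ellmu, if_neg hμ, sum_exp_sub_eq_inv_softmax, inv_rpow (softmax_pos w y).le,
    ← rpow_neg (softmax_pos w y).le, neg_sub]
  field_simp
  ring

lemma condSurRisk_eq (hμ : μ ≠ 1) (w : Fin (m + 2) → ℝ) :
    condSurRisk m μ c p w =
      (∑ y, pext m c p y - ∑ y, pext m c p y * softmax w y ^ (μ - 1)) / (μ - 1) := by
  rw [← sum_sub_distrib, sum_div]
  exact sum_congr rfl fun y _ => by rw [ellmu_eq_softmax m μ hμ]; ring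

lemma iInf_condSurRisk_le (hμ : 1 < μ) (hpe : ∀ y, 0 ≤ pext m c p y) (a : Fin (m + 2)) :
    ⨅ w, condSurRisk m μ c p w ≤ (∑ y, pext m c p y - pext m c p a) / (μ - 1) := by
  have hbdd : BddBelow (Set.range (condSurRisk m μ c p)) := by
    refine ⟨0, ?_⟩
    rintro _ ⟨w, rfl⟩
    rw [condSurRisk_eq m c p μ hμ.ne']
    refine div_nonneg (sub_nonneg.mpr (sum_le_sum fun y _ => ?_)) (by linarith)
    exact mul_le_of_le_one_right (hpe y)
      (rpow_le_one (softmax_pos w y).le (softmax_le_one w y) (by linarith))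
  have hlim : Tendsto (fun t : ℝ => (∑ y, pext m c p y - pext m c p a *
      softmax (fun y => if y = a then t else 0) a ^ (μ - 1)) / (μ - 1)) atTop
      (𝓝 ((∑ y, pext m c p y - pext m c p a) / (μ - 1))) := by
    have := (tendsto_softmax_ite_self a).rpow_const (p := μ - 1) (Or.inr (by linarith))
    simpa using ((this.const_mul (pext m c p a)).const_sub _).div_const _
  refine ge_of_tendsto' hlim fun t => (ciInf_le hbdd fun y => if y = a then t else 0).trans ?_
  rw [condSurRisk_eq m c p μ hμ.ne']
  gcongr
  exact single_le_sum (f := fun y => pext m c p y * softmax _ y ^ (μ - 1))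
    (fun y _ => mul_nonneg (hpe y) (rpow_nonneg (softmax_pos _ y).le _)) (mem_univ a)

lemma sub_sum_le_condSurRisk_sub_iInf (hμ : 1 < μ) (hpe : ∀ y, 0 ≤ pext m c p y)
    (a : Fin (m + 2)) (v : Fin (m + 2) → ℝ) :
    pext m c p a - ∑ y, pext m c p y * softmax v y ^ (μ - 1)
      ≤ (μ - 1) * (condSurRisk m μ c p v - ⨅ w, condSurRisk m μ c p w) := by
  have hμ' : μ - 1 ≠ 0 := by linarith
  have h := mul_le_mul_of_nonneg_left (iInf_condSurRisk_le m c p μ hμ hpe a)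
    (by linarith : 0 ≤ μ - 1)
  rw [mul_div_cancel₀ _ hμ'] at h
  rw [mul_sub, condSurRisk_eq m c p μ hμ.ne', mul_div_cancel₀ _ hμ']
  linarith

end AbstentionRisks

theorem stmt_4_general (m : ℕ) (c : ℝ) (hc : c ∈ Set.Ioo (0 : ℝ) 1)
    (μ : ℝ) (hμ : 2 ≤ μ)
    (p : Fin (m + 1) → ℝ) (hp0 : ∀ y, 0 ≤ p y)
    (v : Fin (m + 2) → ℝ) :
    condAbsRisk m c p v - ⨅ w, condAbsRisk m c p w
      ≤ (μ - 1) * ((m + 2 : ℕ) : ℝ) ^ (μ - 1) *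
          (condSurRisk m μ c p v - ⨅ w, condSurRisk m μ c p w) := by
  obtain ⟨a, -, ha⟩ := exists_max_image univ (pext m c p) univ_nonempty
  replace ha : ∀ y, pext m c p y ≤ pext m c p a := fun y => ha y (mem_univ y)
  have hpe := pext_nonneg m c p hc.2.le hp0
  set h := pred m v
  set K := ((m + 2 : ℕ) : ℝ) ^ (μ - 1)
  have hK : 0 < K := by positivity
  have hsoftmax : K⁻¹ ≤ softmax v h ^ (μ - 1) := by
    rw [← inv_rpow (by positivity)]
    exact rpow_le_rpow (by positivity)
      (by simpa using inv_card_le_softmax (le_apply_pred m v)) (by linarith)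
  have hkey := sub_mul_rpow_le_sub_sum (by linarith : 1 ≤ μ - 1) (hpe a) ha
    (fun y => (softmax_pos v y).le) (sum_softmax v).le h
  calc condAbsRisk m c p v - ⨅ w, condAbsRisk m c p w
      ≤ pext m c p a - pext m c p h := condAbsRisk_sub_iInf_le m c p ha v
    _ = K * ((pext m c p a - pext m c p h) * K⁻¹) := by field_simp
    _ ≤ K * ((pext m c p a - pext m c p h) * softmax v h ^ (μ - 1)) := by
        gcongr; linarith [ha h]
    _ ≤ K * ((μ - 1) * (condSurRisk m μ c p v - ⨅ w, condSurRisk m μ c p w)) :=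
        mul_le_mul_of_nonneg_left
          (hkey.trans (sub_sum_le_condSurRisk_sub_iInf m c p μ (by linarith) hpe a v)) hK.le
    _ = _ := by ring

/-- **Theorem (H-consistency bound for cross-entropy score-based surrogates, conditional
form, case `μ ∈ [2,∞)`).** The abstention calibration gap is bounded linearly:
`ΔC_abs(v,p) ≤ (μ-1) · (n+1)^(μ-1) · ΔC_μ(v,p)`, where `n + 1 = m + 2` and the calibration
gaps are taken over all score vectors (symmetric and complete hypothesis set). -/
theorem stmt_4 (m : ℕ) (hm : 1 ≤ m) (c : ℝ) (hc : c ∈ Set.Ioo (0 : ℝ) 1)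
    (μ : ℝ) (hμ : 2 ≤ μ)
    (p : Fin (m + 1) → ℝ) (hp0 : ∀ y, 0 ≤ p y) (hp1 : ∑ y, p y = 1)
    (v : Fin (m + 2) → ℝ) :
    condAbsRisk m c p v - ⨅ w, condAbsRisk m c p w
      ≤ (μ - 1) * ((m + 2 : ℕ) : ℝ) ^ (μ - 1) *
          (condSurRisk m μ c p v - ⨅ w, condSurRisk m μ c p w) :=
  stmt_4_general m c hc μ hμ p hp0 v
end

section
/- Lemma (Pinsker-type inequality used in the logistic case μ = 1). Let c ∈ (0,1) and let a ≥ b ≥ 0 with a + b ≤ 2 − c and a + b > 0. Then a·log( 2a/(a + b) ) + b·log( 2b/(a + b) ) ≥ (a − b)² / ( 2·(2 − c) ), with the convention 0·log 0 = 0. -/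
/-!
Write `a = s(1 + t)/2` and `b = s(1 - t)/2` with `s = a + b` and `|t| ≤ 1`. The right-hand side
becomes `s/2 · ((1 + t) log (1 + t) + (1 - t) log (1 - t))`, and the bracket is at least `t²`:
both sides vanish at `t = 0`, and the derivative of their difference,
`log (1 + t) - log (1 - t) - 2t`, is nonnegative for `t ≥ 0` because `2t` is the first term of
the power series `2 ∑ t^(2k+1)/(2k+1)` of `log (1 + t) - log (1 - t)`. This gives
`(a - b)² / (2s)` as a lower bound, and `s ≤ 2 - c` finishes.
-/

open Real Set

theorem two_mul_le_log_one_add_sub_log_one_sub {t : ℝ} (h0 : 0 ≤ t) (h1 : t < 1) :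
    2 * t ≤ log (1 + t) - log (1 - t) := by
  have hs := hasSum_log_sub_log_of_abs_lt_one (abs_lt.2 ⟨by linarith, h1⟩)
  simpa using le_hasSum hs 0 fun k _ => by positivity

theorem sq_le_one_add_mul_log_add_one_sub_mul_log {t : ℝ} (ht : |t| ≤ 1) :
    t ^ 2 ≤ (1 + t) * log (1 + t) + (1 - t) * log (1 - t) := by
  wlog h0 : 0 ≤ t generalizing t
  · have := this (t := -t) (by rwa [abs_neg]) (by linarith)
    rw [neg_sq, ← sub_eq_add_neg, sub_neg_eq_add] at this
    linarith
  let φ t : ℝ := (1 + t) * log (1 + t) + (1 - t) * log (1 - t) - t ^ 2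
  have hφ : MonotoneOn φ (Icc 0 1) := by
    refine monotoneOn_of_hasDerivWithinAt_nonneg (f' := fun x => log (1 + x) - log (1 - x) - 2 * x)
      (convex_Icc 0 1) ?_ ?_ ?_
    -- `x * log x` is continuous at `0` (where `log 0 = 0`), so `φ` is continuous up to `t = 1`.
    · exact (continuous_mul_log.comp (continuous_const.add continuous_id)).add
        (continuous_mul_log.comp (continuous_const.sub continuous_id)) |>.sub (continuous_pow 2)
        |>.continuousOn
    · rw [interior_Icc]
      rintro x ⟨hx0, hx1⟩
      have hp : HasDerivAt (fun x => 1 + x) 1 x := (hasDerivAt_id x).const_add 1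
      have hm : HasDerivAt (fun x => 1 - x) (-1) x := (hasDerivAt_id x).const_sub 1
      have := ((hp.mul (hp.log (by linarith))).add (hm.mul (hm.log (by linarith)))).sub
        (hasDerivAt_pow 2 x)
      refine (this.congr_deriv ?_).hasDerivWithinAt
      field_simp
      ring
    · rw [interior_Icc]
      rintro x ⟨hx0, hx1⟩
      have := two_mul_le_log_one_add_sub_log_one_sub hx0.le hx1
      linarith
  simpa [φ] using hφ ⟨le_rfl, zero_le_one⟩ ⟨h0, (abs_le.1 ht).2⟩ h0

theorem pinsker_two_point {a b : ℝ} (ha : 0 ≤ a) (hb : 0 ≤ b) (hab : 0 < a + b) :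
    (a - b) ^ 2 / (2 * (a + b)) ≤ a * log (2 * a / (a + b)) + b * log (2 * b / (a + b)) := by
  obtain ⟨t, ht⟩ : ∃ t, (a + b) * t = a - b := ⟨(a - b) / (a + b), by field_simp⟩
  have ht_abs : |t| ≤ 1 := abs_le.2
    ⟨le_of_mul_le_mul_left (by linarith) hab, le_of_mul_le_mul_left (by linarith) hab⟩
  have hplus : 2 * a / (a + b) = 1 + t := by
    rw [div_eq_iff hab.ne']; linear_combination -ht
  have hminus : 2 * b / (a + b) = 1 - t := by
    rw [div_eq_iff hab.ne']; linear_combination ht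
  calc (a - b) ^ 2 / (2 * (a + b)) = (a + b) / 2 * t ^ 2 := by
        rw [← ht]; field_simp
    _ ≤ (a + b) / 2 * ((1 + t) * log (1 + t) + (1 - t) * log (1 - t)) := by
      gcongr; exact sq_le_one_add_mul_log_add_one_sub_mul_log ht_abs
    _ = _ := by
      rw [hplus, hminus]; linear_combination (log (1 + t) - log (1 - t)) / 2 * ht

theorem stmt_14_general (c a b : ℝ) (hba : b ≤ a) (hb : 0 ≤ b)
    (hab : a + b ≤ 2 - c) (habpos : 0 < a + b) :
    (a - b) ^ 2 / (2 * (2 - c))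
      ≤ a * Real.log (2 * a / (a + b)) + b * Real.log (2 * b / (a + b)) := by
  refine le_trans ?_ (pinsker_two_point (hb.trans hba) hb habpos)
  gcongr

/-- **Lemma (Pinsker-type inequality used in the logistic case `μ = 1`).**
For `c ∈ (0,1)` and `a ≥ b ≥ 0` with `0 < a + b ≤ 2 - c`,
`a log(2a/(a+b)) + b log(2b/(a+b)) ≥ (a-b)² / (2(2-c))` (with `0 · log 0 = 0`; note that
in Mathlib `Real.log 0 = 0`, which realizes this convention). -/
theorem stmt_14 (c a b : ℝ) (hc : c ∈ Set.Ioo (0 : ℝ) 1) (hba : b ≤ a) (hb : 0 ≤ b)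
    (hab : a + b ≤ 2 - c) (habpos : 0 < a + b) :
    (a - b) ^ 2 / (2 * (2 - c))
      ≤ a * Real.log (2 * a / (a + b)) + b * Real.log (2 * b / (a + b)) :=
  stmt_14_general c a b hba hb hab habpos
end
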